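/- Constrained nontrivial chain maps are homological almost-embeddings under separation: let γ : C_*(K; Z₂) → C_*(R; Z₂) be a nontrivial chain map constrained by (F, P), i.e., there is Φ : K → 2^P with Φ(σ ∩ τ) = Φ(σ) ∩ Φ(τ), Φ(∅) = ∅, and the support of γ(σ) contained in conv_F(Φ(σ)) for every simplex σ. If conv_F(S) ∩ conv_F(T) = ∅ for all disjoint subsets S, T ⊆ P, then for any two disjoint simplices σ, τ of K, the supports of γ(σ) and γ(τ) are disjoint; hence γ is a homological almost-embedding of K in R. -/
import Mathlib


open Classical

/-- The convex hull of `S` relative to a family `F` of subsets of `R`. -/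
noncomputable def convF {R : Type*} (F : Set (Set R)) (S : Set R) : Set R :=
  if ∃ A ∈ F, S ⊆ A then ⋂₀ {A | A ∈ F ∧ S ⊆ A} else Set.univ

/-- Constrained nontrivial chain maps are homological almost-embeddings under
separation.  A chain map `γ` from a simplicial complex `K` to singular chains
of `R` is modelled by its supports `supp σ ⊆ R`; it is nontrivial (each vertex
maps to a `0`-chain of odd cardinality), and constrained by `(F, Φ)` with
`Φ : K → 2^P` intersection-preserving, `Φ(∅) = ∅`, and
`supp (γ σ) ⊆ convF F (Φ σ)`.  If the hulls of disjoint subsets of `P` are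
disjoint, then the supports of the images of disjoint simplices of `K` are
disjoint, i.e. `γ` is a homological almost-embedding. -/
theorem constrained_is_homological_almost_embedding
    {V R : Type*} [DecidableEq V] [TopologicalSpace R]
    (K : Set (Finset V)) (hKdown : ∀ σ ∈ K, ∀ τ ⊆ σ, τ ∈ K)
    (F : Set (Set R)) (hF : F.Finite)
    (P : Set R) (hP : P.Finite)
    (supp : Finset V → Set R) (Φ : Finset V → Set R)
    (hΦP : ∀ σ, Φ σ ⊆ P)
    (hΦ0 : Φ ∅ = ∅)
    (hΦ : ∀ σ τ : Finset V, Φ (σ ∩ τ) = Φ σ ∩ Φ τ)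
    (hodd : ∀ v : V, ({v} : Finset V) ∈ K →
      ∃ s : Finset R, (s : Set R) = supp {v} ∧ Odd s.card)
    (hsupp : ∀ σ ∈ K, supp σ ⊆ convF F (Φ σ))
    (hsep : ∀ S T : Set R, S ⊆ P → T ⊆ P → Disjoint S T →
      convF F S ∩ convF F T = ∅) :
    ∀ σ ∈ K, ∀ τ ∈ K, Disjoint σ τ → Disjoint (supp σ) (supp τ) := by
  intro σ hσ τ hτ hdisj
  have h0 : Φ σ ∩ Φ τ = ∅ := by
    rw [← hΦ, Finset.disjoint_iff_inter_eq_empty.mp hdisj, hΦ0]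
  have := hsep (Φ σ) (Φ τ) (hΦP σ) (hΦP τ) (Set.disjoint_iff_inter_eq_empty.mpr h0)
  exact Set.disjoint_iff_inter_eq_empty.mpr <| Set.subset_empty_iff.mp <|
    this ▸ Set.inter_subset_inter (hsupp σ hσ) (hsupp τ hτ)
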